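/- Let p be a prime, I a nonempty finite index set, and for each i ∈ I let fᵢ ∈ ℤ[X] be primitive and irreducible in ℤ[X], such that the fixed divisor of the product ∏_{i∈I} fᵢ equals p. Let g = (∏_{i∈I} fᵢ)/p ∈ Int(ℤ). Then every factorization of g into irreducibles in Int(ℤ) is essentially the same as a factorization of the form g = ((∏_{j∈J} fⱼ)/p) · ∏_{i∈I∖J} fᵢ, where J ⊆ I is minimal (with respect to inclusion) among subsets of I such that the fixed divisor of ∏_{j∈J} fⱼ equals p. -/

import Mathlib

/-!
Over `ℚ[X]` the `fᵢ` are primes (Gauss's lemma), so any factorization `g = h₁ ⋯ hₙ` in `Int(ℤ)`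
distributes them among the factors: `hₖ = rₖ ∏_{i ∈ Sₖ} fᵢ` with `rₖ ∈ ℚ` and the `Sₖ`
partitioning `I`. Integer-valuedness of `hₖ` forces `den rₖ ∣ d(∏_{Sₖ} fᵢ)`, and the fixed divisor
is supermultiplicative, so `∏ₖ den rₖ ∣ d(∏_I fᵢ) = p`. Together with `∏ₖ rₖ = 1/p` this leaves
exactly one factor `±(∏_J fⱼ)/p` while all other `rₖ` are `±1`. Irreducibility of the factors
then makes every other `Sₖ` a singleton and `J` minimal.
-/

open Polynomial

/-- The ring of integer-valued polynomials `Int(ℤ) = {f ∈ ℚ[X] | f(ℤ) ⊆ ℤ}`,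
as a subring of ℚ[X]. -/
noncomputable def IntValued : Subring (Polynomial ℚ) where
  carrier := {f | ∀ c : ℤ, ∃ m : ℤ, f.eval (c : ℚ) = (m : ℚ)}
  zero_mem' := fun c => ⟨0, by simp⟩
  one_mem' := fun c => ⟨1, by simp⟩
  add_mem' := by
    rintro f g hf hg c
    obtain ⟨m, hm⟩ := hf c
    obtain ⟨n, hn⟩ := hg c
    exact ⟨m + n, by simp [hm, hn]⟩
  mul_mem' := by
    rintro f g hf hg c
    obtain ⟨m, hm⟩ := hf c
    obtain ⟨n, hn⟩ := hg c
    exact ⟨m * n, by simp [hm, hn]⟩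
  neg_mem' := by
    rintro f hf c
    obtain ⟨m, hm⟩ := hf c
    exact ⟨-m, by simp [hm]⟩

/-- The fixed divisor `d(f)` of `f ∈ ℤ[X]`: the nonnegative generator of the
ideal of ℤ generated by the image `f(ℤ)`. -/
noncomputable def fixedDivisor (f : Polynomial ℤ) : ℕ :=
  (@Submodule.IsPrincipal.generator ℤ ℤ _ _ _
    (Ideal.span (Set.range fun c : ℤ => f.eval c))
    (IsPrincipalIdealRing.principal _)).natAbs

/-- An integer polynomial, viewed as an element of `Int(ℤ)`. -/
noncomputable def toIV (f : Polynomial ℤ) : IntValued :=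
  ⟨f.map (Int.castRingHom ℚ), fun c => ⟨f.eval c, by simp [Polynomial.eval_intCast_map]⟩⟩

theorem intCast_dvd_fixedDivisor_iff {f : ℤ[X]} {e : ℤ} :
    e ∣ (fixedDivisor f : ℤ) ↔ ∀ c : ℤ, e ∣ f.eval c := by
  rw [fixedDivisor, Int.dvd_natAbs, ← Ideal.span_singleton_le_span_singleton,
    Ideal.span_singleton_generator, Ideal.span_le, Set.range_subset_iff]
  simp only [SetLike.mem_coe, Ideal.mem_span_singleton]

theorem fixedDivisor_dvd_eval (f : ℤ[X]) (c : ℤ) : (fixedDivisor f : ℤ) ∣ f.eval c :=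
  intCast_dvd_fixedDivisor_iff.1 dvd_rfl c

theorem fixedDivisor_one : fixedDivisor 1 = 1 := by
  have h := fixedDivisor_dvd_eval 1 0
  rw [eval_one] at h
  exact Nat.dvd_one.1 (by exact_mod_cast h)

theorem fixedDivisor_mul_dvd (f g : ℤ[X]) :
    fixedDivisor f * fixedDivisor g ∣ fixedDivisor (f * g) := by
  rw [← Int.natCast_dvd_natCast, Nat.cast_mul, intCast_dvd_fixedDivisor_iff]
  intro c
  rw [eval_mul]
  exact mul_dvd_mul (fixedDivisor_dvd_eval f c) (fixedDivisor_dvd_eval g c)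

theorem fixedDivisor_dvd_fixedDivisor {f g : ℤ[X]} (h : f ∣ g) :
    fixedDivisor f ∣ fixedDivisor g := by
  obtain ⟨k, rfl⟩ := h
  exact (dvd_mul_right _ _).trans (fixedDivisor_mul_dvd f k)

theorem Multiset.prod_map_fixedDivisor_dvd (s : Multiset ℤ[X]) :
    (s.map fixedDivisor).prod ∣ fixedDivisor s.prod := by
  induction s using Multiset.induction_on with
  | empty => simp [fixedDivisor_one]
  | cons f s ih =>
    simp only [Multiset.map_cons, Multiset.prod_cons]
    exact (mul_dvd_mul_left _ ih).trans (fixedDivisor_mul_dvd f s.prod)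

theorem Rat.den_dvd_iff_exists_mul_eq_intCast {q : ℚ} {z : ℤ} :
    (q.den : ℤ) ∣ z ↔ ∃ m : ℤ, q * z = m := by
  constructor
  · rintro ⟨t, rfl⟩
    exact ⟨q.num * t, by push_cast; rw [← mul_assoc, Rat.mul_den_eq_num]⟩
  · rintro ⟨m, hm⟩
    rcases eq_or_ne z 0 with rfl | hz
    · exact dvd_zero _
    have hq : q = Rat.divInt m z := by
      rw [Rat.divInt_eq_div, ← hm]
      field_simp
    exact hq ▸ Rat.den_dvd m z

theorem Polynomial.exists_eq_C_mul_of_associated {K : Type*} [Field K] {a b : K[X]}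
    (h : Associated a b) : ∃ r : K, a = C r * b := by
  obtain ⟨u, hu⟩ := h.symm
  obtain ⟨r, -, hr⟩ := Polynomial.isUnit_iff.1 u.isUnit
  exact ⟨r, by rw [← hu, ← hr, mul_comm]⟩

theorem Polynomial.IsPrimitive.prime_map_intCast {P : ℤ[X]} (hP : P.IsPrimitive)
    (hirr : Irreducible P) : Prime (P.map (Int.castRingHom ℚ)) :=
  ((hP.irreducible_iff_irreducible_map_fraction_map (K := ℚ)).1 hirr).prime

section PrimeFactorSplitting

variable {α β ι : Type*} [CommMonoidWithZero α] [IsCancelMulZero α] {g : ι → α}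

theorem exists_split_of_mul_associated_prod {M : Multiset ι} (hM : ∀ i ∈ M, Prime (g i))
    {x y : α} (h : Associated (x * y) (M.map g).prod) :
    ∃ M₁ M₂ : Multiset ι, M₁ + M₂ = M ∧
      Associated x (M₁.map g).prod ∧ Associated y (M₂.map g).prod := by
  induction M using Multiset.induction_on generalizing x y with
  | empty =>
    rw [Multiset.map_zero, Multiset.prod_zero, associated_one_iff_isUnit, IsUnit.mul_iff] at h
    exact ⟨0, 0, rfl, by simpa using h.1, by simpa using h.2⟩
  | cons a M ih =>
    have ha := hM a (Multiset.mem_cons_self a M)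
    have hM' := fun i hi => hM i (Multiset.mem_cons_of_mem hi)
    rw [Multiset.map_cons, Multiset.prod_cons] at h
    rcases ha.dvd_or_dvd ((dvd_mul_right (g a) _).trans h.symm.dvd) with ⟨x', rfl⟩ | ⟨y', rfl⟩
    · rw [mul_assoc] at h
      obtain ⟨M₁, M₂, rfl, hx, hy⟩ := ih hM' (h.of_mul_left (Associated.refl _) ha.ne_zero)
      exact ⟨a ::ₘ M₁, M₂, Multiset.cons_add _ _ _, by simpa using hx.mul_left (g a), hy⟩
    · rw [mul_left_comm] at h
      obtain ⟨M₁, M₂, rfl, hx, hy⟩ := ih hM' (h.of_mul_left (Associated.refl _) ha.ne_zero)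
      exact ⟨M₁, a ::ₘ M₂, Multiset.add_cons _ _ _, hx, by simpa using hy.mul_left (g a)⟩

theorem exists_partition_of_prod_associated_prod (φ : β → α) {L : Multiset β}
    {M : Multiset ι} (hM : ∀ i ∈ M, Prime (g i)) (h : Associated (L.map φ).prod (M.map g).prod) :
    ∃ Z : Multiset (β × Multiset ι), Z.map Prod.fst = L ∧ (Z.map Prod.snd).sum = M ∧
      ∀ z ∈ Z, Associated (φ z.1) (z.2.map g).prod := by
  induction L using Multiset.induction_on generalizing M with
  | empty =>
    obtain rfl : M = 0 := by
      refine Multiset.eq_zero_of_forall_notMem fun i hi => (hM i hi).not_isUnit ?_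
      refine isUnit_of_dvd_unit (Multiset.dvd_prod (Multiset.mem_map_of_mem g hi)) ?_
      simpa using h.symm
    exact ⟨0, rfl, rfl, by simp⟩
  | cons x L ih =>
    rw [Multiset.map_cons, Multiset.prod_cons] at h
    obtain ⟨M₁, M₂, rfl, hx, hL⟩ := exists_split_of_mul_associated_prod hM h
    obtain ⟨Z, rfl, rfl, hZ⟩ := ih (fun i hi => hM i (Multiset.mem_add.2 (Or.inr hi))) hL
    exact ⟨(x, M₁) ::ₘ Z, by simp, by simp, Multiset.forall_mem_cons.2 ⟨hx, hZ⟩⟩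

end PrimeFactorSplitting

theorem Rat.exists_cons_of_natCast_mul_prod_eq_one {β : Type*} {p : ℕ} (hp : p.Prime)
    {s : Multiset β} {r : β → ℚ} (hden : (s.map fun b => (r b).den).prod ∣ p)
    (hprod : (p : ℚ) * (s.map r).prod = 1) :
    ∃ b t, s = b ::ₘ t ∧ (∃ ε : ℤ, IsUnit ε ∧ (p : ℚ) * r b = ε) ∧
      ∀ c ∈ t, ∃ ε : ℤ, IsUnit ε ∧ r c = ε := by
  have hND : (p : ℤ) * (s.map fun b => (r b).num).prod = (s.map fun b => (r b).den).prod := by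
    have h : (p : ℚ) * ((s.map fun b => (r b).num).prod : ℤ) =
        ((s.map fun b => (r b).den).prod : ℕ) := by
      rw [← one_mul (((s.map fun b => (r b).den).prod : ℕ) : ℚ), ← hprod, mul_assoc]
      simp only [Nat.cast_multiset_prod, Int.cast_multiset_prod, Multiset.map_map,
        Function.comp_def, ← Multiset.prod_map_mul, Rat.mul_den_eq_num]
    exact Int.cast_injective (α := ℚ) <| by
      rw [Int.cast_mul, Int.cast_natCast, Int.cast_natCast]; exact h
  have hD : (s.map fun b => (r b).den).prod = p :=
    Nat.dvd_antisymm hden (Int.natCast_dvd_natCast.1 ⟨_, hND.symm⟩)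
  have hN : (s.map fun b => (r b).num).prod = 1 := by
    rw [hD] at hND
    exact (mul_eq_left₀ (by exact_mod_cast hp.ne_zero)).1 hND
  obtain ⟨b, hb, hpb⟩ := (Nat.prime_iff.1 hp).exists_mem_multiset_map_dvd hD.symm.dvd
  have hnum : ∀ c ∈ s, IsUnit (r c).num := fun c hc =>
    isUnit_of_dvd_one (hN ▸ Multiset.dvd_prod (Multiset.mem_map_of_mem _ hc))
  obtain ⟨t, rfl⟩ := Multiset.exists_cons_of_mem hb
  rw [Multiset.map_cons, Multiset.prod_cons] at hD
  have hb_den : (r b).den = p := Nat.dvd_antisymm (hD ▸ dvd_mul_right _ _) hpb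
  rw [hb_den, mul_eq_left₀ hp.ne_zero] at hD
  refine ⟨b, t, rfl, ⟨_, hnum b (Multiset.mem_cons_self b t), ?_⟩,
    fun c hc => ⟨_, hnum c (Multiset.mem_cons_of_mem hc), ?_⟩⟩
  · rw [← hb_den, mul_comm, Rat.mul_den_eq_num]
  · exact (Rat.coe_int_num_of_den_eq_one
      (Nat.dvd_one.1 (hD ▸ Multiset.dvd_prod (Multiset.mem_map_of_mem _ hc)))).symm

theorem Multiset.map_eq_map_sum_of_forall_eq_singleton {β γ ι : Type*} {W : Multiset β}
    {a : β → γ} {s : β → Multiset ι} {φ : ι → γ} (h : ∀ w ∈ W, ∃ i, s w = {i} ∧ a w = φ i) :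
    W.map a = (W.map s).sum.map φ := by
  induction W using Multiset.induction_on with
  | empty => simp
  | cons w W ih =>
    rw [Multiset.forall_mem_cons] at h
    obtain ⟨i, hs, ha⟩ := h.1
    simp [hs, ha, ih h.2]

theorem toIV_one : toIV 1 = 1 := Subtype.ext (by simp [toIV])

theorem toIV_mul (P Q : ℤ[X]) : toIV (P * Q) = toIV P * toIV Q :=
  Subtype.ext (by simp [toIV])

namespace IntValued

theorem C_mul_map_mem_iff (r : ℚ) (P : ℤ[X]) :
    C r * P.map (Int.castRingHom ℚ) ∈ IntValued ↔ (r.den : ℤ) ∣ fixedDivisor P := by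
  rw [intCast_dvd_fixedDivisor_iff]
  refine forall_congr' fun c => ?_
  rw [Rat.den_dvd_iff_exists_mul_eq_intCast]
  simp [eval_intCast_map]

theorem den_dvd_fixedDivisor {h : IntValued} {r : ℚ} {P : ℤ[X]}
    (hh : (h : ℚ[X]) = C r * P.map (Int.castRingHom ℚ)) : (r.den : ℤ) ∣ fixedDivisor P :=
  (C_mul_map_mem_iff r P).1 (hh ▸ h.2)

theorem coe_eq_C_inv_mul {h : IntValued} {p : ℕ} (hp : p ≠ 0) {P : ℤ[X]}
    (hh : (h : ℚ[X]) * C (p : ℚ) = P.map (Int.castRingHom ℚ)) :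
    (h : ℚ[X]) = C (p : ℚ)⁻¹ * P.map (Int.castRingHom ℚ) := by
  rw [mul_comm, ← hh, mul_assoc, ← C_mul, mul_inv_cancel₀ (by exact_mod_cast hp), C_1, mul_one]

theorem natCast_dvd_fixedDivisor {h : IntValued} {p : ℕ} (hp : p ≠ 0) {P : ℤ[X]}
    (hh : (h : ℚ[X]) * C (p : ℚ) = P.map (Int.castRingHom ℚ)) : p ∣ fixedDivisor P := by
  have := den_dvd_fixedDivisor (coe_eq_C_inv_mul hp hh)
  rwa [Rat.inv_natCast_den_of_pos (Nat.pos_of_ne_zero hp), Int.natCast_dvd_natCast] at this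

theorem fixedDivisor_eq_of_mul_C_eq {h : IntValued} {p : ℕ} (hp : p ≠ 0) {P Q : ℤ[X]}
    (hh : (h : ℚ[X]) * C (p : ℚ) = P.map (Int.castRingHom ℚ)) (hPQ : P ∣ Q)
    (hQ : fixedDivisor Q = p) : fixedDivisor P = p :=
  Nat.dvd_antisymm (hQ ▸ fixedDivisor_dvd_fixedDivisor hPQ) (natCast_dvd_fixedDivisor hp hh)

theorem not_isUnit_of_dvd {h : IntValued} {q : ℚ[X]} (hq : ¬IsUnit q) (hdvd : q ∣ h) :
    ¬IsUnit h :=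
  fun hu => hq (isUnit_of_dvd_unit hdvd (hu.map IntValued.subtype))

theorem associated_toIV {h : IntValued} {ε : ℤ} (hε : IsUnit ε) {P : ℤ[X]}
    (hh : (h : ℚ[X]) = C (ε : ℚ) * P.map (Int.castRingHom ℚ)) : Associated h (toIV P) := by
  have : h = (ε : IntValued) * toIV P := Subtype.ext (by simp [hh, toIV])
  exact this ▸ associated_unit_mul_left _ _ (hε.map (Int.castRingHom IntValued))

theorem exists_associated_mul_C_eq {h : IntValued} {ε : ℤ} (hε : IsUnit ε) {q : ℚ} {P : ℤ[X]}
    (hh : (h : ℚ[X]) * C q = C (ε : ℚ) * P.map (Int.castRingHom ℚ)) :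
    ∃ g : IntValued, Associated h g ∧ (g : ℚ[X]) * C q = P.map (Int.castRingHom ℚ) := by
  refine ⟨(ε : IntValued) * h,
    (associated_unit_mul_left h _ (hε.map (Int.castRingHom IntValued))).symm, ?_⟩
  rw [Subring.coe_mul, mul_assoc, hh, ← mul_assoc, Subring.coe_intCast, ← C_eq_intCast, ← C_mul,
    ← Int.cast_mul, Int.isUnit_mul_self hε, Int.cast_one, C_1, one_mul]

section Factorizations

variable {ι : Type*} {f : ι → ℤ[X]}

theorem coe_prod_eq_C_mul_map_prod {Z : Multiset (IntValued × Multiset ι)}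
    {r : IntValued × Multiset ι → ℚ}
    (hr : ∀ z ∈ Z, (z.1 : ℚ[X]) = C (r z) * ((z.2.map f).prod).map (Int.castRingHom ℚ)) :
    ((Z.map Prod.fst).prod : ℚ[X]) =
      C (Z.map r).prod * (((Z.map Prod.snd).sum.map f).prod).map (Int.castRingHom ℚ) := by
  induction Z using Multiset.induction_on with
  | empty => simp
  | cons z Z ih =>
    rw [Multiset.forall_mem_cons] at hr
    simp only [Multiset.map_cons, Multiset.prod_cons, Multiset.sum_cons, Multiset.map_add,
      Multiset.prod_add, Subring.coe_mul, hr.1, ih hr.2, Polynomial.map_mul, C_mul]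
    ring

theorem exists_partition_of_prod_mul_C_eq {p : ℕ} (hp : p.Prime) {M : Multiset ι}
    (hprime : ∀ i ∈ M, Prime ((f i).map (Int.castRingHom ℚ)))
    (hd : fixedDivisor (M.map f).prod = p) {L : Multiset IntValued}
    (hL : (L.prod : ℚ[X]) * C (p : ℚ) = ((M.map f).prod).map (Int.castRingHom ℚ)) :
    ∃ (z₀ : IntValued × Multiset ι) (Z : Multiset (IntValued × Multiset ι)),
      (z₀ ::ₘ Z).map Prod.fst = L ∧ z₀.2 + (Z.map Prod.snd).sum = M ∧
      (∃ g : IntValued, Associated z₀.1 g ∧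
        (g : ℚ[X]) * C (p : ℚ) = ((z₀.2.map f).prod).map (Int.castRingHom ℚ)) ∧
      ∀ z ∈ Z, Associated z.1 (toIV (z.2.map f).prod) := by
  have hL' : (L.map ((↑) : IntValued → ℚ[X])).prod = L.prod :=
    (map_multiset_prod IntValued.subtype L).symm
  have hM : (M.map fun i => (f i).map (Int.castRingHom ℚ)).prod =
      ((M.map f).prod).map (Int.castRingHom ℚ) := by
    rw [Polynomial.map_multiset_prod, Multiset.map_map]; rfl
  have hC : IsUnit (C (p : ℚ)) := isUnit_C.2 (by simpa using hp.ne_zero)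
  obtain ⟨Z, hfst, hsnd, hZ⟩ := exists_partition_of_prod_associated_prod _ hprime
    (by rw [hL', hM, ← hL]; exact associated_mul_unit_right _ _ hC)
  have hr : ∀ z ∈ Z, ∃ q : ℚ, (z.1 : ℚ[X]) = C q * ((z.2.map f).prod).map (Int.castRingHom ℚ) :=
    fun z hz => by
      obtain ⟨q, hq⟩ := exists_eq_C_mul_of_associated (hZ z hz)
      exact ⟨q, by rw [hq, Polynomial.map_multiset_prod, Multiset.map_map]; rfl⟩
  choose! r hr using hr
  have hprod : (p : ℚ) * (Z.map r).prod = 1 := by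
    have hX : ((M.map f).prod).map (Int.castRingHom ℚ) ≠ 0 := by
      rw [← hM]
      refine Multiset.prod_ne_zero fun h0 => ?_
      obtain ⟨i, hi, hi0⟩ := Multiset.mem_map.1 h0
      exact (hprime i hi).ne_zero hi0
    rw [← hfst, coe_prod_eq_C_mul_map_prod hr, hsnd, mul_right_comm, ← C_mul] at hL
    rw [mul_comm]
    exact C_injective (((mul_eq_right₀ hX).1 hL).trans C_1.symm)
  have hden : (Z.map fun z => (r z).den).prod ∣ p := by
    have hpieces : (Z.map fun z => (z.2.map f).prod).prod = (M.map f).prod := by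
      rw [← hsnd, ← Multiset.join, Multiset.map_join, Multiset.prod_join, Multiset.map_map,
        Multiset.map_map]
      rfl
    have hz : ∀ z ∈ Z, (r z).den ∣ fixedDivisor (z.2.map f).prod := fun z hz =>
      Int.natCast_dvd_natCast.1 (den_dvd_fixedDivisor (hr z hz))
    refine (Multiset.prod_dvd_prod_of_dvd _ _ hz).trans ?_
    have := Multiset.prod_map_fixedDivisor_dvd (Z.map fun z => (z.2.map f).prod)
    rwa [Multiset.map_map, hpieces, hd] at this
  obtain ⟨z₀, Z', rfl, ⟨ε, hε, hz₀⟩, hZ'⟩ :=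
    Rat.exists_cons_of_natCast_mul_prod_eq_one hp hden hprod
  refine ⟨z₀, Z', hfst, by simpa using hsnd, exists_associated_mul_C_eq hε ?_, fun z hz => ?_⟩
  · rw [hr z₀ (Multiset.mem_cons_self z₀ Z'), mul_right_comm, ← C_mul, mul_comm _ (p : ℚ), hz₀]
  · obtain ⟨ε, hε, hrz⟩ := hZ' z hz
    exact associated_toIV hε (hrz ▸ hr z (Multiset.mem_cons_of_mem hz))

theorem exists_eq_singleton_of_associated_toIV {s : Multiset ι}
    (hs : ∀ i ∈ s, ¬IsUnit ((f i).map (Int.castRingHom ℚ))) {h : IntValued} (hh : Irreducible h)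
    (hhs : Associated h (toIV (s.map f).prod)) : ∃ i, s = {i} ∧ Associated h (toIV (f i)) := by
  have hirr := hhs.irreducible hh
  rcases s.empty_or_exists_mem with rfl | ⟨i, hi⟩
  · rw [Multiset.map_zero, Multiset.prod_zero, toIV_one] at hirr
    exact absurd hirr not_irreducible_one
  obtain ⟨t, rfl⟩ := Multiset.exists_cons_of_mem hi
  rcases t.empty_or_exists_mem with rfl | ⟨j, hj⟩
  · exact ⟨i, rfl, by simpa using hhs⟩
  rw [Multiset.map_cons, Multiset.prod_cons, toIV_mul] at hirr
  rcases hirr.isUnit_or_isUnit rfl with hu | hu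
  · exact absurd hu (not_isUnit_of_dvd (hs i hi) dvd_rfl)
  · refine absurd hu (not_isUnit_of_dvd (hs j (Multiset.mem_cons_of_mem hj)) ?_)
    exact Polynomial.map_dvd _ (Multiset.dvd_prod (Multiset.mem_map_of_mem f hj))

theorem eq_of_fixedDivisor_prod_eq {p : ℕ} (hp : p.Prime) {J J' : Finset ι}
    (hJ : ∀ j ∈ J, ¬IsUnit ((f j).map (Int.castRingHom ℚ))) {g : IntValued} (hg : Irreducible g)
    (hgJ : (g : ℚ[X]) * C (p : ℚ) = (∏ j ∈ J, f j).map (Int.castRingHom ℚ)) (hJ'J : J' ⊆ J)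
    (hJ' : fixedDivisor (∏ j ∈ J', f j) = p) : J' = J := by
  classical
  by_contra hne
  obtain ⟨j', hj'⟩ : J'.Nonempty := Finset.nonempty_iff_ne_empty.2 fun h => by
    rw [h, Finset.prod_empty, fixedDivisor_one] at hJ'
    exact hp.one_lt.ne hJ'
  obtain ⟨j, hj⟩ : (J \ J').Nonempty := Finset.sdiff_nonempty.2 fun h => hne (hJ'J.antisymm h)
  have hmem : C (p : ℚ)⁻¹ * (∏ j ∈ J', f j).map (Int.castRingHom ℚ) ∈ IntValued := by
    rw [C_mul_map_mem_iff, Rat.inv_natCast_den_of_pos hp.pos, hJ']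
  have hsplit : g = ⟨_, hmem⟩ * toIV (∏ j ∈ J \ J', f j) := by
    refine Subtype.ext ?_
    rw [Subring.coe_mul, coe_eq_C_inv_mul hp.ne_zero hgJ, ← Finset.prod_sdiff hJ'J]
    simp only [toIV, Polynomial.map_mul]
    ring
  rcases hg.isUnit_or_isUnit hsplit with hu | hu
  · refine absurd hu (not_isUnit_of_dvd (hJ j' (hJ'J hj')) ?_)
    exact (Polynomial.map_dvd _ (Finset.dvd_prod_of_mem f hj')).mul_left _
  · refine absurd hu (not_isUnit_of_dvd (hJ j (Finset.sdiff_subset hj)) ?_)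
    exact Polynomial.map_dvd _ (Finset.dvd_prod_of_mem f hj)

end Factorizations

end IntValued

theorem factorizations_of_prod_div_prime_general {ι : Type*} [DecidableEq ι]
    (p : ℕ) (hp : p.Prime) (I : Finset ι)
    (f : ι → Polynomial ℤ)
    (hprim : ∀ i ∈ I, (f i).IsPrimitive) (hirr : ∀ i ∈ I, Irreducible (f i))
    (hd : fixedDivisor (∏ i ∈ I, f i) = p)
    (g : IntValued)
    (hg : (g : Polynomial ℚ) * Polynomial.C (p : ℚ)
        = (∏ i ∈ I, f i).map (Int.castRingHom ℚ)) :
    ∀ L : Multiset IntValued, (∀ h ∈ L, Irreducible h) → L.prod = g →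
      ∃ J : Finset ι, J ⊆ I ∧ fixedDivisor (∏ j ∈ J, f j) = p ∧
        (∀ J' : Finset ι, J' ⊆ J → fixedDivisor (∏ j ∈ J', f j) = p → J' = J) ∧
        ∃ gJ : IntValued,
          (gJ : Polynomial ℚ) * Polynomial.C (p : ℚ)
              = (∏ j ∈ J, f j).map (Int.castRingHom ℚ) ∧
          L.map Associates.mk
            = Multiset.map Associates.mk
                (gJ ::ₘ ((I \ J).val.map fun i => toIV (f i))) := by
  intro L hL hLg
  have hprime : ∀ i ∈ I, Prime ((f i).map (Int.castRingHom ℚ)) :=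
    fun i hi => (hprim i hi).prime_map_intCast (hirr i hi)
  obtain ⟨z₀, Z, hfst, hsnd, ⟨gJ, hz₀gJ, hgJ⟩, hZ⟩ :=
    IntValued.exists_partition_of_prod_mul_C_eq hp hprime hd (hLg ▸ hg)
  have hirrL : ∀ z ∈ z₀ ::ₘ Z, Irreducible z.1 :=
    fun z hz => hL _ (hfst ▸ Multiset.mem_map_of_mem _ hz)
  have hZI : ∀ z ∈ Z, ∀ i ∈ z.2, ¬IsUnit ((f i).map (Int.castRingHom ℚ)) := by
    intro z hz i hi
    have hzI : z.2 ≤ I.val := hsnd ▸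
      (Multiset.le_sum_of_mem (Multiset.mem_map_of_mem _ hz)).trans (Multiset.le_add_left _ _)
    exact (hprime i (Multiset.mem_of_le hzI hi)).not_isUnit
  have hz₀I : z₀.2 ≤ I.val := hsnd ▸ Multiset.le_add_right _ _
  set J : Finset ι := ⟨z₀.2, Multiset.nodup_of_le hz₀I I.nodup⟩
  have hJI : J ⊆ I := Finset.val_le_iff.1 hz₀I
  have hirrJ : Irreducible gJ := hz₀gJ.irreducible (hirrL z₀ (Multiset.mem_cons_self z₀ Z))
  refine ⟨J, hJI, IntValued.fixedDivisor_eq_of_mul_C_eq hp.ne_zero hgJ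
      (Finset.prod_dvd_prod_of_subset _ _ _ hJI) hd,
    fun J' => IntValued.eq_of_fixedDivisor_prod_eq hp
      (fun j hj => (hprime j (hJI hj)).not_isUnit) hirrJ hgJ, gJ, hgJ, ?_⟩
  have hsingle : ∀ z ∈ Z, ∃ i, z.2 = {i} ∧ Associates.mk z.1 = Associates.mk (toIV (f i)) :=
    fun z hz => (IntValued.exists_eq_singleton_of_associated_toIV (hZI z hz)
      (hirrL z (Multiset.mem_cons_of_mem hz)) (hZ z hz)).imp
        fun _ hi => ⟨hi.1, Associates.mk_eq_mk_iff_associated.2 hi.2⟩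
  have hrest : (Z.map Prod.snd).sum = (I \ J).val := by
    rw [Finset.sdiff_val]
    exact eq_tsub_of_add_eq ((add_comm _ _).trans hsnd)
  rw [← hfst, Multiset.map_map, Multiset.map_cons, Multiset.map_cons, Function.comp_apply,
    Associates.mk_eq_mk_iff_associated.2 hz₀gJ, Multiset.map_map, ← hrest]
  exact congrArg _ (Multiset.map_eq_map_sum_of_forall_eq_singleton hsingle)

/-- Lemma 4: if `fᵢ ∈ ℤ[X]` are primitive and irreducible with
`d(∏ᵢ fᵢ) = p` prime, then every factorization of `g = (∏ᵢ fᵢ)/p` into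
irreducibles of `Int(ℤ)` is essentially of the form
`g = ((∏_{j∈J} fⱼ)/p) ⋅ ∏_{i∈I∖J} fᵢ` for some `J ⊆ I` minimal with
`d(∏_{j∈J} fⱼ) = p`. -/
theorem factorizations_of_prod_div_prime {ι : Type*} [DecidableEq ι]
    (p : ℕ) (hp : p.Prime) (I : Finset ι) (hI : I.Nonempty)
    (f : ι → Polynomial ℤ)
    (hprim : ∀ i ∈ I, (f i).IsPrimitive) (hirr : ∀ i ∈ I, Irreducible (f i))
    (hd : fixedDivisor (∏ i ∈ I, f i) = p)
    (g : IntValued)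
    (hg : (g : Polynomial ℚ) * Polynomial.C (p : ℚ)
        = (∏ i ∈ I, f i).map (Int.castRingHom ℚ)) :
    ∀ L : Multiset IntValued, (∀ h ∈ L, Irreducible h) → L.prod = g →
      ∃ J : Finset ι, J ⊆ I ∧ fixedDivisor (∏ j ∈ J, f j) = p ∧
        (∀ J' : Finset ι, J' ⊆ J → fixedDivisor (∏ j ∈ J', f j) = p → J' = J) ∧
        ∃ gJ : IntValued,
          (gJ : Polynomial ℚ) * Polynomial.C (p : ℚ)
              = (∏ j ∈ J, f j).map (Int.castRingHom ℚ) ∧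
          L.map Associates.mk
            = Multiset.map Associates.mk
                (gJ ::ₘ ((I \ J).val.map fun i => toIV (f i))) :=
  factorizations_of_prod_div_prime_general p hp I f hprim hirr hd g hg
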